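/- Let S be a finite or countable set, x0 ∈ S, and for each i ∈ S let α_i > 0 and let q_i be a probability mass function on S (q_i(j) ≥ 0, ∑_{j∈S} q_i(j) = 1). Define the process law p on finite strings over S starting at x0 by p(empty string) = 1 and, recursively, p(x,i,j) = p(x,i) · (α_i q_i(j) + T_{i,j}(x0,x,i)) / (α_i + T_{i,·}(x0,x,i)), where T_{i,·}(z) = ∑_{j'} T_{i,j'}(z). Then p (the law of the reinforced Hoppe urn scheme) is Markov exchangeable. -/

import Mathlib

/-!
STATEMENT 18: the process law of the reinforced Hoppe urn scheme is
Markov exchangeable.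
-/

variable {S : Type*} [DecidableEq S]

/-- The number of transitions from `i` to `j` in the finite string `z`. -/
def transCount (z : List S) (i j : S) : ℕ :=
  (z.zip z.tail).countP (fun q => decide (q = (i, j)))

/-- The number of transitions from `i` in the finite string `z`. -/
def transFrom (z : List S) (i : S) : ℕ :=
  (z.zip z.tail).countP (fun q => decide (q.1 = i))

/-- Two finite strings are equivalent if they have the same first element and the
same transition counts between any two states. -/
def StringEquiv (z z' : List S) : Prop :=
  z.head? = z'.head? ∧ ∀ i j : S, transCount z i j = transCount z' i j

/-- One-step predictive probability of the reinforced Hoppe urn scheme: the past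
path is `z` (starting at `x0`, ending at the current state), the next state is `y`. -/
noncomputable def hoppeStep (α : S → ℝ) (q : S → S → ℝ) (z : List S) (y : S) : ℝ :=
  match z.getLast? with
  | none => 0
  | some i => (α i * q i y + (transCount z i y : ℝ)) / (α i + (transFrom z i : ℝ))

/-- The probability of appending the string `x` to the past path `z`. -/
noncomputable def lawFrom (step : List S → S → ℝ) : List S → List S → ℝ
  | _, [] => 1
  | z, y :: rest => step z y * lawFrom step (z ++ [y]) rest

/-- The process law of the reinforced Hoppe urn scheme started at `x0`:
`hoppeLaw α q x0 (x1, …, xn) = P(X_1 = x1, …, X_n = xn)`. -/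
noncomputable def hoppeLaw (α : S → ℝ) (q : S → S → ℝ) (x0 : S) (x : List S) : ℝ :=
  lawFrom (hoppeStep α q) [x0] x

/-!
Along the path `(x0, x)` each transition `i → j` contributes the factor
`(α i * q i j + c) / (α i + d)`, where `c` and `d` count the earlier transitions `i → j` and
`i → ·`. So `p(x)` is a product over the list of transitions in which each factor depends only
on the transition and on how often it occurred before; such a product depends only on the
multiset of transitions, which is what equal transition counts fix.
-/

namespace List

variable {α : Type*}

theorem consecutivePairs_singleton (a : α) : [a].consecutivePairs = [] := rfl

theorem consecutivePairs_cons_cons (a b : α) (l : List α) :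
    (a :: b :: l).consecutivePairs = (a, b) :: (b :: l).consecutivePairs := rfl

theorem consecutivePairs_append_cons (l l' : List α) (a : α) :
    (l ++ a :: l').consecutivePairs =
      (l ++ [a]).consecutivePairs ++ (a :: l').consecutivePairs := by
  induction l with
  | nil => rfl
  | cons b l ih =>
    cases l with
    | nil => rfl
    | cons c l =>
      simp only [cons_append] at ih ⊢
      rw [consecutivePairs_cons_cons, consecutivePairs_cons_cons, ih, cons_append]

variable {β M : Type*} [BEq β] [CommMonoid M]

def prodPriorCount (f : β → ℕ → M) : List β → List β → M
  | _, [] => 1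
  | pre, b :: t => f b (pre.count b) * prodPriorCount f (pre ++ [b]) t

theorem prodPriorCount_congr_left (f : β → ℕ → M) (L : List β) {pre pre' : List β}
    (h : pre.Perm pre') : prodPriorCount f pre L = prodPriorCount f pre' L := by
  induction L generalizing pre pre' with
  | nil => rfl
  | cons b t ih => rw [prodPriorCount, prodPriorCount, h.count_eq, ih (h.append_right [b])]

theorem prodPriorCount_perm [LawfulBEq β] (f : β → ℕ → M) {L L' : List β} (hL : L.Perm L')
    (pre : List β) :
    prodPriorCount f pre L = prodPriorCount f pre L' := by
  induction hL generalizing pre with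
  | nil => rfl
  | cons b _ ih => rw [prodPriorCount, prodPriorCount, ih]
  | swap a b t =>
    by_cases hab : a = b
    · subst hab; rfl
    have hswap : pre ++ [b] ++ [a] ~ pre ++ [a] ++ [b] := by
      simpa only [append_assoc] using (perm_append_comm (l₁ := [b]) (l₂ := [a])).append_left pre
    simp only [prodPriorCount, prodPriorCount_congr_left f t hswap, count_append,
      count_singleton, beq_iff_eq, hab, Ne.symm hab, if_false, add_zero]
    ac_rfl
  | trans _ _ ih₁ ih₂ => rw [ih₁, ih₂]

end List

theorem transCount_eq_count (z : List S) (i j : S) :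
    transCount z i j = z.consecutivePairs.count (i, j) := by
  rw [transCount, List.count_eq_countP]
  exact List.countP_congr fun _ _ => by simp

theorem transFrom_eq_count (z : List S) (i : S) :
    transFrom z i = (z.consecutivePairs.map Prod.fst).count i := by
  rw [transFrom, List.count_eq_countP, List.countP_map]
  exact List.countP_congr fun _ _ => by simp

theorem hoppeStep_append_singleton (α : S → ℝ) (q : S → S → ℝ) (z : List S) (i y : S) :
    hoppeStep α q (z ++ [i]) y =
      (α i * q i y + ((z ++ [i]).consecutivePairs.count (i, y) : ℝ)) /
        (α i + (((z ++ [i]).consecutivePairs.map Prod.fst).count i : ℝ)) := by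
  simp only [hoppeStep, List.getLast?_concat, transCount_eq_count, transFrom_eq_count]

theorem lawFrom_hoppeStep (α : S → ℝ) (q : S → S → ℝ) (z : List S) (i : S) (x : List S) :
    lawFrom (hoppeStep α q) (z ++ [i]) x =
      List.prodPriorCount (fun e c => α e.1 * q e.1 e.2 + c)
          (z ++ [i]).consecutivePairs (i :: x).consecutivePairs /
        List.prodPriorCount (fun k c => α k + c)
          ((z ++ [i]).consecutivePairs.map Prod.fst) ((i :: x).consecutivePairs.map Prod.fst) := by
  induction x generalizing z i with
  | nil => simp [lawFrom, List.consecutivePairs_singleton, List.prodPriorCount]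
  | cons y rest ih =>
    have hpast :
        (z ++ [i] ++ [y]).consecutivePairs = (z ++ [i]).consecutivePairs ++ [(i, y)] := by
      rw [List.append_assoc, List.singleton_append, List.consecutivePairs_append_cons]; rfl
    rw [lawFrom, ih, hoppeStep_append_singleton, div_mul_div_comm, hpast,
      List.consecutivePairs_cons_cons]
    simp only [List.map_cons, List.map_nil, List.map_append, List.prodPriorCount]

theorem hoppe_markovExchangeable_general
    (α : S → ℝ)
    (q : S → S → ℝ)
    (x0 : S) :
    ∀ x x' : List S, StringEquiv (x0 :: x) (x0 :: x') →
      hoppeLaw α q x0 x = hoppeLaw α q x0 x' := by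
  rintro x x' ⟨-, hcount⟩
  have hperm : (x0 :: x).consecutivePairs.Perm (x0 :: x').consecutivePairs :=
    List.perm_iff_count.2 fun ⟨i, j⟩ => by simpa only [transCount_eq_count] using hcount i j
  have hlaw := lawFrom_hoppeStep α q [] x0
  rw [hoppeLaw, hoppeLaw, ← List.nil_append [x0], hlaw, hlaw,
    List.prodPriorCount_perm _ hperm, List.prodPriorCount_perm _ (hperm.map Prod.fst)]

theorem hoppe_markovExchangeable [Countable S] [Nontrivial S]
    (α : S → ℝ) (hα : ∀ i, 0 < α i)
    (q : S → S → ℝ) (hq0 : ∀ i j, 0 ≤ q i j) (hq1 : ∀ i, HasSum (q i) 1)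
    (x0 : S) :
    ∀ x x' : List S, StringEquiv (x0 :: x) (x0 :: x') →
      hoppeLaw α q x0 x = hoppeLaw α q x0 x' :=
  hoppe_markovExchangeable_general α q x0
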